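/- arXiv:2501.08066 — 2 statements merged into one kernel-verified Lean document; each statement's English description precedes it below -/
import Mathlib

section
/- Let 0 < p < ∞, let A_1, …, A_K be Hermitian n×n complex matrices, and set C := Σ_{k=1}^K |A_k ⊗ₖ 1 − 1 ⊗ₖ A_kᵀ|^p. Then for every ε > 0 there exists p₀ such that for every p' ≥ p₀ there exist finitely many Hermitian n×n complex matrices B_1, …, B_J with ‖C − Σ_{j=1}^J |B_j ⊗ₖ 1 − 1 ⊗ₖ B_jᵀ|^{p'}‖ ≤ ε, where ‖·‖ is the ℓ²→ℓ² operator norm on matrices. (Every p-cost operator lies in C_∞(H): C_p(H) ⊆ C_∞(H).) -/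
/-!
Diagonalise `A = U diag(λ) U*`. Then `A ⊗ₖ 1 - 1 ⊗ₖ Aᵀ` is diagonalised by `U ⊗ₖ Ū`, with
eigenvalues `λ a - λ b`, and so is the cost operator of every `f(A)`, with eigenvalues
`|f (λ a) - f (λ b)| ^ q`. It therefore suffices to write `|x - y| ^ p`, for `x, y` in the finite
spectrum `S`, approximately as a sum of terms `|g x - g y| ^ q`. For each ordered pair `(s, t)`
in `S × S` take `g = cutFun p q (s, t)`, equal to `0` at `s`, `1` at `t` and `1/2` elsewhere,
scaled so that `|g s - g t| ^ q = |s - t| ^ p / 2`. The terms of the pairs `(x, y)` and `(y, x)` add up to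
`|x - y| ^ p`, while every other increment of `g` is at most half of the scale, so its `q`-th power
carries an extra factor `2 ^ (-q)`. Summing over the `A k` gives an error `O(2 ^ (-q))`.
-/

open Kronecker Matrix
open scoped ComplexOrder

/-- `costOp p A` is the cost operator `|A ⊗ₖ 1 - 1 ⊗ₖ Aᵀ|^p`, where `|·|^p` is the
functional calculus applied with `x ↦ |x| ^ p` (real rpow). -/
noncomputable def costOp {n : ℕ} (p : ℝ) (A : Matrix (Fin n) (Fin n) ℂ) :
    Matrix (Fin n × Fin n) (Fin n × Fin n) ℂ :=
  cfc (fun x : ℝ => |x| ^ p)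
    (A ⊗ₖ (1 : Matrix (Fin n) (Fin n) ℂ) - (1 : Matrix (Fin n) (Fin n) ℂ) ⊗ₖ Aᵀ)

open scoped Matrix.Norms.L2Operator

open Polynomial Unitary Filter Topology

lemma AddSubmonoid.exists_fin_sum_of_mem_closure_range {ι M : Type*} [AddCommMonoid M]
    {f : ι → M} {x : M} (hx : x ∈ AddSubmonoid.closure (Set.range f)) :
    ∃ (J : ℕ) (b : Fin J → ι), x = ∑ j, f (b j) := by
  induction hx using AddSubmonoid.closure_induction with
  | mem x hx =>
    obtain ⟨i, rfl⟩ := hx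
    exact ⟨1, fun _ => i, by simp⟩
  | zero => exact ⟨0, Fin.elim0, by simp⟩
  | add x y _ _ hx hy =>
    obtain ⟨J, b, rfl⟩ := hx
    obtain ⟨J', b', rfl⟩ := hy
    exact ⟨J + J', Fin.append b b', by simp [Fin.sum_univ_add]⟩

lemma Matrix.kronecker_mul_kronecker_mul_conjTranspose {R l m : Type*} [CommRing R] [StarRing R]
    [Fintype l] [Fintype m] (U X : Matrix l l R) (V Y : Matrix m m R) :
    (U ⊗ₖ V) * (X ⊗ₖ Y) * (U ⊗ₖ V)ᴴ = (U * X * Uᴴ) ⊗ₖ (V * Y * Vᴴ) := by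
  rw [conjTranspose_kronecker, ← mul_kronecker_mul, ← mul_kronecker_mul]

lemma Matrix.diagonal_ofReal_sub_sum {m 𝕜 ι : Type*} [DecidableEq m] [RCLike 𝕜] (T : Finset ι)
    (v : m → ℝ) (w : ι → m → ℝ) :
    diagonal (RCLike.ofReal ∘ v : m → 𝕜) - ∑ i ∈ T, diagonal (RCLike.ofReal ∘ w i) =
      diagonal (RCLike.ofReal ∘ fun a => v a - ∑ i ∈ T, w i a) := by
  ext a b
  by_cases hab : a = b <;> simp [sum_apply, hab]

section FunctionalCalculus

variable {m 𝕜 : Type*} [Fintype m] [DecidableEq m] [RCLike 𝕜]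

lemma Matrix.spectrum_real_diagonal_ofReal_subset (e : m → ℝ) :
    spectrum ℝ (diagonal (RCLike.ofReal ∘ e : m → 𝕜)) ⊆ Set.range e := by
  intro r hr
  obtain ⟨i, hi⟩ := spectrum_diagonal (RCLike.ofReal ∘ e : m → 𝕜) ▸
    (spectrum.algebraMap_mem_iff 𝕜).mpr hr
  exact ⟨i, RCLike.ofReal_injective hi⟩

lemma Matrix.aeval_diagonal_ofReal (e : m → ℝ) (P : ℝ[X]) :
    aeval (diagonal (RCLike.ofReal ∘ e : m → 𝕜)) P =
      diagonal (RCLike.ofReal ∘ fun i => P.eval (e i)) := by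
  change aeval (diagonalAlgHom ℝ (RCLike.ofReal ∘ e : m → 𝕜)) P = _
  rw [aeval_algHom_apply, aeval_pi_apply]
  refine congrArg diagonal (funext fun i => ?_)
  simp only [Function.comp_apply, ← RCLike.algebraMap_eq_ofReal, aeval_algebraMap_apply,
    coe_aeval_eq_eval]

lemma Matrix.cfc_diagonal_ofReal (e : m → ℝ) (f : ℝ → ℝ) :
    cfc f (diagonal (RCLike.ofReal ∘ e : m → 𝕜)) = diagonal (RCLike.ofReal ∘ f ∘ e) := by
  obtain ⟨P, hP⟩ : ∃ P : ℝ[X], ∀ i, P.eval (e i) = f (e i) :=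
    ⟨Lagrange.interpolate (Finset.univ.image e) id f, fun i =>
      Lagrange.eval_interpolate_at_node f (Set.injOn_id _)
        (Finset.mem_image_of_mem e (Finset.mem_univ i))⟩
  have hD : IsSelfAdjoint (diagonal (RCLike.ofReal ∘ e : m → 𝕜)) := by
    simp [IsSelfAdjoint, star_eq_conjTranspose, diagonal_conjTranspose]
  rw [cfc_congr (g := P.eval), cfc_polynomial _ _ hD, aeval_diagonal_ofReal]
  · ext i j
    simp [hP, diagonal_apply]
  · intro x hx
    obtain ⟨i, rfl⟩ := spectrum_real_diagonal_ofReal_subset e hx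
    exact (hP i).symm

lemma Matrix.cfc_conjStarAlgAut (u : unitary (Matrix m m 𝕜)) (f : ℝ → ℝ) {X : Matrix m m 𝕜}
    (hX : IsSelfAdjoint X) :
    cfc f (conjStarAlgAut 𝕜 _ u X) = conjStarAlgAut 𝕜 _ u (cfc f X) := by
  refine (StarAlgHomClass.map_cfc (conjStarAlgAut 𝕜 _ u) f X (S := 𝕜)
    (X.finite_real_spectrum.continuousOn f) ?_ hX (hX.conjugate _)).symm
  change Continuous fun Y : Matrix m m 𝕜 => (u : Matrix m m 𝕜) * Y * star (u : Matrix m m 𝕜)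
  fun_prop

lemma Matrix.cfc_conjStarAlgAut_diagonal_ofReal (u : unitary (Matrix m m 𝕜)) (e : m → ℝ)
    (f : ℝ → ℝ) :
    cfc f (conjStarAlgAut 𝕜 _ u (diagonal (RCLike.ofReal ∘ e))) =
      conjStarAlgAut 𝕜 _ u (diagonal (RCLike.ofReal ∘ f ∘ e)) := by
  rw [cfc_conjStarAlgAut u f (by simp [IsSelfAdjoint, star_eq_conjTranspose,
    diagonal_conjTranspose]), cfc_diagonal_ofReal]

end FunctionalCalculus

section CutDecomposition

noncomputable def cutWeight (s t x : ℝ) : ℝ :=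
  if x = s then 0 else if x = t then 1 else 2⁻¹

lemma abs_cutWeight_sub_eq_one {s t x y : ℝ} (hxy : x ≠ y)
    (h : (s, t) = (x, y) ∨ (s, t) = (y, x)) :
    |cutWeight s t x - cutWeight s t y| = 1 := by
  rcases h with h | h <;> simp only [Prod.mk.injEq] at h <;> obtain ⟨rfl, rfl⟩ := h <;>
    simp [cutWeight, hxy, hxy.symm]

lemma abs_cutWeight_sub_le_half {s t x y : ℝ} (h : ¬((s, t) = (x, y) ∨ (s, t) = (y, x))) :
    |cutWeight s t x - cutWeight s t y| ≤ 2⁻¹ := by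
  simp only [Prod.mk.injEq] at h
  unfold cutWeight
  split_ifs <;> subst_vars <;> simp_all <;> norm_num [abs_le]

noncomputable def cutFun (p q : ℝ) (st : ℝ × ℝ) (x : ℝ) : ℝ :=
  (|st.1 - st.2| ^ p / 2) ^ q⁻¹ * cutWeight st.1 st.2 x

lemma abs_cutFun_sub_rpow {p q : ℝ} (hq : q ≠ 0) (st : ℝ × ℝ) (x y : ℝ) :
    |cutFun p q st x - cutFun p q st y| ^ q =
      |st.1 - st.2| ^ p / 2 * |cutWeight st.1 st.2 x - cutWeight st.1 st.2 y| ^ q := by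
  have hc : 0 ≤ |st.1 - st.2| ^ p / 2 := by positivity
  rw [cutFun, cutFun, ← mul_sub, abs_mul, abs_of_nonneg (by positivity),
    Real.mul_rpow (by positivity) (abs_nonneg _), Real.rpow_inv_rpow hc hq]

lemma abs_rpow_sub_sum_cutFun_le (S : Finset ℝ) {p q : ℝ} (hp : 0 < p) (hq : 0 < q) {x y : ℝ}
    (hx : x ∈ S) (hy : y ∈ S) :
    |(|x - y| ^ p) - ∑ st ∈ S ×ˢ S, |cutFun p q st x - cutFun p q st y| ^ q| ≤
      (∑ st ∈ S ×ˢ S, |st.1 - st.2| ^ p / 2) * 2⁻¹ ^ q := by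
  have hbound : 0 ≤ (∑ st ∈ S ×ˢ S, |st.1 - st.2| ^ p / 2) * 2⁻¹ ^ q := by positivity
  rcases eq_or_ne x y with rfl | hxy
  · simpa [Real.zero_rpow hp.ne', Real.zero_rpow hq.ne'] using hbound
  set P : Finset (ℝ × ℝ) := {(x, y), (y, x)}
  have hexact : |x - y| ^ p = ∑ st ∈ S ×ˢ S, if st ∈ P then |st.1 - st.2| ^ p / 2 else 0 := by
    have hPS : P ⊆ S ×ˢ S := by
      simp [P, Finset.insert_subset_iff, hx, hy]
    rw [Finset.sum_ite_mem, Finset.inter_eq_right.2 hPS, Finset.sum_pair (by simp [hxy]),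
      abs_sub_comm y x]
    ring
  rw [hexact, ← Finset.sum_sub_distrib, Finset.sum_mul]
  refine (Finset.abs_sum_le_sum_abs _ _).trans (Finset.sum_le_sum fun st _ => ?_)
  rw [abs_cutFun_sub_rpow hq.ne']
  split_ifs with hst
  · rw [abs_cutWeight_sub_eq_one hxy (by simpa [P] using hst), Real.one_rpow, mul_one, sub_self,
      abs_zero]
    positivity
  · rw [zero_sub, abs_neg, abs_of_nonneg (by positivity)]
    gcongr
    exact abs_cutWeight_sub_le_half (by simpa [P] using hst)

end CutDecomposition

section CostOperator

variable {n : ℕ}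

def kroneckerConj (u : unitary (Matrix (Fin n) (Fin n) ℂ)) :
    unitary (Matrix (Fin n × Fin n) (Fin n × Fin n) ℂ) :=
  ⟨u ⊗ₖ (u : Matrix (Fin n) (Fin n) ℂ).map star,
    kronecker_mem_unitary u.2 (map_star_mem_unitaryGroup_iff.mpr u.2)⟩

lemma kronecker_one_sub_one_kronecker_transpose (u : unitary (Matrix (Fin n) (Fin n) ℂ))
    (e : Fin n → ℝ) {A : Matrix (Fin n) (Fin n) ℂ}
    (hA : A = conjStarAlgAut ℂ _ u (diagonal (RCLike.ofReal ∘ e))) :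
    A ⊗ₖ (1 : Matrix (Fin n) (Fin n) ℂ) - (1 : Matrix (Fin n) (Fin n) ℂ) ⊗ₖ Aᵀ =
      conjStarAlgAut ℂ _ (kroneckerConj u)
        (diagonal (RCLike.ofReal ∘ fun ab : Fin n × Fin n => e ab.1 - e ab.2)) := by
  set D : Matrix (Fin n) (Fin n) ℂ := diagonal (RCLike.ofReal ∘ e)
  set ū : Matrix (Fin n) (Fin n) ℂ := (u : Matrix (Fin n) (Fin n) ℂ).map star
  have hdiff : diagonal (RCLike.ofReal ∘ fun ab : Fin n × Fin n => e ab.1 - e ab.2) =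
      D ⊗ₖ 1 - 1 ⊗ₖ D := by
    rw [← diagonal_one, diagonal_kronecker_diagonal, diagonal_kronecker_diagonal, diagonal_sub]
    congr 1
    ext ab
    simp
  have hAT : Aᵀ = ū * D * ūᴴ := by
    have h1 : (star (u : Matrix (Fin n) (Fin n) ℂ))ᵀ = ū := by ext; simp [ū]
    have h2 : (u : Matrix (Fin n) (Fin n) ℂ)ᵀ = ūᴴ := by ext; simp [ū]
    simp only [hA, D, conjStarAlgAut_apply, transpose_mul, diagonal_transpose, h1, h2, mul_assoc]
  have hu : (u : Matrix (Fin n) (Fin n) ℂ) * (u : Matrix _ _ ℂ)ᴴ = 1 := u.2.2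
  have hū : ū * ūᴴ = 1 := (map_star_mem_unitaryGroup_iff.mpr u.2).2
  rw [hdiff, map_sub, conjStarAlgAut_apply, conjStarAlgAut_apply, kroneckerConj]
  simp only [star_eq_conjTranspose, kronecker_mul_kronecker_mul_conjTranspose]
  rw [mul_one, mul_one, hū, hu, ← hAT, hA]
  rfl

lemma costOp_cfc {A : Matrix (Fin n) (Fin n) ℂ} (hA : A.IsHermitian) (f : ℝ → ℝ) (q : ℝ) :
    costOp q (cfc f A) = conjStarAlgAut ℂ _ (kroneckerConj hA.eigenvectorUnitary)
      (diagonal (RCLike.ofReal ∘ fun ab : Fin n × Fin n =>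
        |f (hA.eigenvalues ab.1) - f (hA.eigenvalues ab.2)| ^ q)) := by
  rw [costOp, kronecker_one_sub_one_kronecker_transpose _ (f ∘ hA.eigenvalues) (hA.cfc_eq f),
    cfc_conjStarAlgAut_diagonal_ofReal]
  rfl

variable (n) in
def costOpSums (q : ℝ) : AddSubmonoid (Matrix (Fin n × Fin n) (Fin n × Fin n) ℂ) :=
  AddSubmonoid.closure
    (Set.range fun B : {B : Matrix (Fin n) (Fin n) ℂ // B.IsHermitian} => costOp q B.1)

lemma exists_mem_costOpSums_norm_sub_le {A : Matrix (Fin n) (Fin n) ℂ} (hA : A.IsHermitian) {p : ℝ}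
    (hp : 0 < p) :
    ∃ M : ℝ, ∀ q, 0 < q → ∃ X ∈ costOpSums n q, ‖costOp p A - X‖ ≤ M * 2⁻¹ ^ q := by
  set S := Finset.univ.image hA.eigenvalues
  refine ⟨∑ st ∈ S ×ˢ S, |st.1 - st.2| ^ p / 2, fun q hq =>
    ⟨∑ st ∈ S ×ˢ S, costOp q (cfc (cutFun p q st) A),
      sum_mem fun st _ =>
        AddSubmonoid.subset_closure ⟨⟨_, cfc_predicate (cutFun p q st) A⟩, rfl⟩, ?_⟩⟩
  have hid : costOp p A = costOp p (cfc (id : ℝ → ℝ) A) := by rw [cfc_id ℝ A]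
  simp only [hid, costOp_cfc hA]
  rw [← map_sum, ← map_sub, conjStarAlgAut_apply, ← coe_star, CStarRing.norm_mul_coe_unitary,
    CStarRing.norm_coe_unitary_mul, diagonal_ofReal_sub_sum, l2_opNorm_diagonal,
    pi_norm_le_iff_of_nonneg (by positivity)]
  intro ab
  rw [Function.comp_apply, RCLike.norm_ofReal]
  exact abs_rpow_sub_sum_cutFun_le S hp hq (Finset.mem_image_of_mem _ (Finset.mem_univ _))
    (Finset.mem_image_of_mem _ (Finset.mem_univ _))

end CostOperator

/-- Every `p`-cost operator lies in `C_∞(H)`: it is approximated in the `ℓ²→ℓ²` operator norm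
by sums of `p'`-cost operators, for all sufficiently large `p'`. -/
theorem p_cost_subset_infty_cost {n : ℕ} (p : ℝ) (hp : 0 < p) (K : ℕ)
    (A : Fin K → Matrix (Fin n) (Fin n) ℂ) (hA : ∀ k, (A k).IsHermitian) :
    ∀ ε : ℝ, 0 < ε → ∃ p₀ : ℝ, ∀ p' : ℝ, p₀ ≤ p' →
      ∃ (J : ℕ) (B : Fin J → Matrix (Fin n) (Fin n) ℂ),
        (∀ j, (B j).IsHermitian) ∧
        ‖(∑ k, costOp p (A k)) - ∑ j, costOp p' (B j)‖ ≤ ε := by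
  intro ε hε
  choose M hM using fun k => exists_mem_costOpSums_norm_sub_le (hA k) hp
  have hrate : Tendsto (fun q : ℝ => (∑ k, M k) * 2⁻¹ ^ q) atTop (𝓝 0) := by
    simpa using (tendsto_rpow_atTop_of_base_lt_one 2⁻¹ (by norm_num) (by norm_num)).const_mul _
  obtain ⟨p₀, hp₀⟩ := eventually_atTop.1
    ((eventually_gt_atTop 0).and (hrate.eventually (ge_mem_nhds hε)))
  refine ⟨p₀, fun q hq => ?_⟩
  obtain ⟨hq0, hqε⟩ := hp₀ q hq
  choose X hXmem hX using fun k => hM k q hq0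
  obtain ⟨J, B, hsum⟩ :=
    AddSubmonoid.exists_fin_sum_of_mem_closure_range (sum_mem fun k _ => hXmem k)
  refine ⟨J, fun j => (B j).1, fun j => (B j).2, ?_⟩
  rw [← hsum, ← Finset.sum_sub_distrib]
  calc ‖∑ k, (costOp p (A k) - X k)‖ ≤ ∑ k, ‖costOp p (A k) - X k‖ := norm_sum_le _ _
    _ ≤ ∑ k, M k * 2⁻¹ ^ q := Finset.sum_le_sum fun k _ => hX k
    _ = (∑ k, M k) * 2⁻¹ ^ q := (Finset.sum_mul _ _ _).symm
    _ ≤ ε := hqε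
end

section
/- Let ρ and ω be density matrices on ℂ^n and assume ρ is pure (ρ·ρ = ρ). Then the only coupling of ρ and ω is the product state: every density matrix Π indexed by Fin n × Fin n satisfying trace(Π · (B ⊗ₖ 1)) = trace(ω · B) and trace(Π · (1 ⊗ₖ Bᵀ)) = trace(ρ · B) for all complex n×n matrices B equals ω ⊗ₖ ρᵀ. -/
/-!
Since `ρ` is a pure state, `Q = 1 ⊗ₖ ρᵀ` is an orthogonal projection, and the second marginal
condition with `B = ρ` gives `tr (P Q) = tr (ρ ρ) = 1 = tr P`. Hence `tr (P (1 - Q)) = 0`, and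
for positive semidefinite matrices this forces `P (1 - Q) = 0`, i.e. `P = Q P Q`. A pure state
is a rank-one projection, so it compresses every matrix to a multiple of itself:
`ρ M ρ = tr (ρ M) ρ`. Applied blockwise, `Q P Q` is a product `N ⊗ₖ ρᵀ`, and the first
marginal condition identifies `N` with `ω`.
-/

open Kronecker Matrix
open scoped ComplexOrder

/-- A density matrix: positive semidefinite with unit trace. -/
def IsDensity {m : Type*} [Fintype m] (ρ : Matrix m m ℂ) : Prop :=
  ρ.PosSemidef ∧ ρ.trace = 1

/-- `P` is a coupling of the density matrices `ρ` and `ω`. -/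
def IsCoupling {n : ℕ} (ρ ω : Matrix (Fin n) (Fin n) ℂ)
    (P : Matrix (Fin n × Fin n) (Fin n × Fin n) ℂ) : Prop :=
  IsDensity P ∧ ∀ B : Matrix (Fin n) (Fin n) ℂ,
    (P * (B ⊗ₖ (1 : Matrix (Fin n) (Fin n) ℂ))).trace = (ω * B).trace ∧
    (P * ((1 : Matrix (Fin n) (Fin n) ℂ) ⊗ₖ Bᵀ)).trace = (ρ * B).trace

/-- The optimal transport cost between `α` and `β` for the cost operator `C`. -/
noncomputable def wcost {n : ℕ} (C : Matrix (Fin n × Fin n) (Fin n × Fin n) ℂ)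
    (α β : Matrix (Fin n) (Fin n) ℂ) : ℝ :=
  sInf {x : ℝ | ∃ P, IsCoupling α β P ∧ x = (P * C).trace.re}

namespace Matrix

variable {m n : Type*} [Fintype m] [Fintype n]

section RCLike

variable {𝕜 : Type*} [RCLike 𝕜]

theorem PosSemidef.mul_eq_zero_of_trace_mul_eq_zero {A B : Matrix n n 𝕜}
    (hA : A.PosSemidef) (hB : B.PosSemidef) (h : (A * B).trace = 0) : A * B = 0 := by
  classical
  open scoped MatrixOrder in
  obtain ⟨X, rfl⟩ := CStarAlgebra.nonneg_iff_eq_star_mul_self.mp hA.nonneg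
  open scoped MatrixOrder in
  obtain ⟨Y, rfl⟩ := CStarAlgebra.nonneg_iff_eq_star_mul_self.mp hB.nonneg
  have hYX : Y * star X = 0 := by
    rw [← trace_conjTranspose_mul_self_eq_zero_iff, ← h, conjTranspose_mul, star_eq_conjTranspose,
      star_eq_conjTranspose, conjTranspose_conjTranspose, trace_mul_cycle, mul_assoc (Y * Xᴴ),
      mul_assoc Y, trace_mul_comm]
    simp only [mul_assoc]
  calc star X * X * (star Y * Y) = star X * star (Y * star X) * Y := by
        simp only [star_mul, star_star, mul_assoc]
    _ = 0 := by rw [hYX, star_zero, mul_zero, zero_mul]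

theorem PosSemidef.mul_eq_self_of_trace_mul_eq_trace [DecidableEq n] {P Q : Matrix n n 𝕜}
    (hP : P.PosSemidef) (hQ : IsStarProjection Q) (h : (P * Q).trace = P.trace) :
    P * Q = P := by
  have hQc : (1 - Q).PosSemidef := by
    obtain ⟨hidem, hsa⟩ := hQ.one_sub
    have h := posSemidef_conjTranspose_mul_self (1 - Q)
    rwa [← star_eq_conjTranspose, hsa.star_eq, hidem.eq] at h
  have hzero : P * (1 - Q) = 0 :=
    hP.mul_eq_zero_of_trace_mul_eq_zero hQc (by rw [mul_sub, mul_one, trace_sub, h, sub_self])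
  rwa [mul_sub, mul_one, sub_eq_zero, eq_comm] at hzero

theorem _root_.IsStarProjection.one_kronecker_transpose [DecidableEq m] {E : Matrix n n 𝕜}
    (hE : IsStarProjection E) : IsStarProjection ((1 : Matrix m m 𝕜) ⊗ₖ Eᵀ) where
  isIdempotentElem := by
    rw [IsIdempotentElem, ← mul_kronecker_mul, one_mul, ← transpose_mul, hE.isIdempotentElem.eq]
  isSelfAdjoint := by
    rw [IsSelfAdjoint, star_eq_conjTranspose, conjTranspose_kronecker, conjTranspose_one,
      conjTranspose_transpose_eq_transpose_conjTranspose, ← star_eq_conjTranspose,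
      hE.isSelfAdjoint.star_eq]

end RCLike

open LinearMap in
/-- An idempotent of trace one has rank one. -/
theorem mul_mul_eq_trace_mul_smul_of_isIdempotentElem {K : Type*} [Field K] [CharZero K]
    [DecidableEq n] {E : Matrix n n K} (hE : IsIdempotentElem E) (htr : E.trace = 1)
    (M : Matrix n n K) : E * M * E = (E * M).trace • E := by
  have he : IsIdempotentElem (toLin' E) := hE.map toLinAlgEquiv'
  have hrank : Module.finrank K (range (toLin' E)) = 1 := by
    have := he.isProj_range.trace
    rw [trace_toLin'_eq, htr] at this
    exact_mod_cast this.symm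
  obtain ⟨v, -, hspan⟩ := finrank_eq_one_iff'.mp hrank
  obtain ⟨c, hc⟩ := hspan ⟨E *ᵥ (M *ᵥ v), mem_range_self (toLin' E) _⟩
  have hcompress : E * M * E = c • E := by
    refine toLin'.injective (LinearMap.ext fun x => ?_)
    obtain ⟨a, ha⟩ := hspan ⟨E *ᵥ x, mem_range_self (toLin' E) x⟩
    simp only [Subtype.ext_iff, SetLike.val_smul] at hc ha
    simp [toLin'_apply, ← ha, ← hc, smul_comm a c]
  have htrace := congrArg trace hcompress
  rw [trace_mul_cycle, hE.eq, trace_smul, htr, smul_eq_mul, mul_one] at htrace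
  rw [hcompress, htrace]

def partialTraceRight {R : Type*} [AddCommMonoid R] (X : Matrix (m × n) (m × n) R) :
    Matrix m m R :=
  of fun i j => ∑ c, X (i, c) (j, c)

variable {R : Type*} [CommSemiring R]

theorem trace_mul_kronecker_one [DecidableEq n] (X : Matrix (m × n) (m × n) R)
    (B : Matrix m m R) :
    (X * (B ⊗ₖ (1 : Matrix n n R))).trace = (partialTraceRight X * B).trace := by
  simp only [trace, diag_apply, mul_apply, kroneckerMap_apply, one_apply, mul_ite, mul_one,
    mul_zero, Fintype.sum_prod_type, Finset.sum_ite_eq', Finset.mem_univ, ↓reduceIte,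
    partialTraceRight, of_apply, Finset.sum_mul]
  exact Finset.sum_congr rfl fun _ _ => Finset.sum_comm

theorem one_kronecker_mul_mul_one_kronecker [DecidableEq m] {E : Matrix n n R}
    (hE : ∀ M, E * M * E = (E * M).trace • E) (X : Matrix (m × n) (m × n) R) :
    (1 ⊗ₖ E) * X * (1 ⊗ₖ E) = partialTraceRight (X * (1 ⊗ₖ E)) ⊗ₖ E := by
  ext ⟨i, a⟩ ⟨j, b⟩
  have hblock := congrFun (congrFun (hE (of fun c d => X (i, c) (j, d))) a) b
  simp only [mul_apply, of_apply, Finset.sum_mul, trace, diag_apply, smul_apply, smul_eq_mul,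
    kroneckerMap_apply, one_apply, ite_mul, one_mul, zero_mul, Fintype.sum_prod_type,
    Finset.sum_ite_irrel, Finset.sum_const_zero, Finset.sum_ite_eq, Finset.mem_univ, ↓reduceIte,
    mul_ite, mul_zero, Finset.sum_ite_eq', partialTraceRight] at hblock ⊢
  rw [hblock, Finset.sum_comm]
  exact Finset.sum_congr rfl fun c _ => Finset.sum_congr rfl fun d _ => by ring

end Matrix

theorem IsCoupling.partialTraceRight_eq {n : ℕ} {ρ ω : Matrix (Fin n) (Fin n) ℂ}
    {P : Matrix (Fin n × Fin n) (Fin n × Fin n) ℂ} (hP : IsCoupling ρ ω P) :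
    partialTraceRight P = ω :=
  ext_iff_trace_mul_right.mpr fun B => by rw [← trace_mul_kronecker_one, (hP.2 B).1]

theorem coupling_unique_of_pure_general {n : ℕ} (ρ ω : Matrix (Fin n) (Fin n) ℂ)
    (hρ : IsDensity ρ) (hρpure : ρ * ρ = ρ)
    (P : Matrix (Fin n × Fin n) (Fin n × Fin n) ℂ) (hP : IsCoupling ρ ω P) :
    P = ω ⊗ₖ ρᵀ := by
  set Q := (1 : Matrix (Fin n) (Fin n) ℂ) ⊗ₖ ρᵀ
  have hQ : IsStarProjection Q :=
    (⟨hρpure, hρ.1.isHermitian⟩ : IsStarProjection ρ).one_kronecker_transpose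
  have hPQ : P * Q = P := hP.1.1.mul_eq_self_of_trace_mul_eq_trace hQ <| by
    rw [(hP.2 ρ).2, hρpure, hρ.2, hP.1.2]
  have hQP : Q * P = P := by
    simpa only [star_mul, hQ.isSelfAdjoint.star_eq, hP.1.1.isHermitian.star_eq] using
      congrArg star hPQ
  have hρT : IsIdempotentElem ρᵀ := by rw [IsIdempotentElem, ← transpose_mul, hρpure]
  calc P = Q * P * Q := by rw [hQP, hPQ]
    _ = partialTraceRight (P * Q) ⊗ₖ ρᵀ :=
      one_kronecker_mul_mul_one_kronecker
        (mul_mul_eq_trace_mul_smul_of_isIdempotentElem hρT (by rw [trace_transpose, hρ.2])) P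
    _ = ω ⊗ₖ ρᵀ := by rw [hPQ, hP.partialTraceRight_eq]

/-- If `ρ` is pure, the only coupling of `ρ` and `ω` is the product state `ω ⊗ₖ ρᵀ`. -/
theorem coupling_unique_of_pure {n : ℕ} (ρ ω : Matrix (Fin n) (Fin n) ℂ)
    (hρ : IsDensity ρ) (hω : IsDensity ω) (hρpure : ρ * ρ = ρ)
    (P : Matrix (Fin n × Fin n) (Fin n × Fin n) ℂ) (hP : IsCoupling ρ ω P) :
    P = ω ⊗ₖ ρᵀ :=
  coupling_unique_of_pure_general ρ ω hρ hρpure P hP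
end
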